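/- arXiv:2502.09562 — 7 statements merged into one kernel-verified Lean document; each statement's English description precedes it below -/
import Mathlib

section
/- Let R be a commutative ring, m a maximal ideal of R, κ a field, ι : κ → R an injective ring homomorphism, and j : R/m ≅ κ a ring isomorphism such that ι ∘ j is a section of the canonical projection π : R → R/m (i.e., π(ι(j([z]))) = [z] for all z ∈ R). Regard m as a non-unital commutative κ-algebra via the multiplication of R and the scalar action u • x = ι(u)·x. Then the map φ : Unitization κ m → R defined by φ(u,x) = ι(u) + x is a ring isomorphism. -/
/-! The composite `R → κ → R`, `z ↦ ι (j [z])`, differs from the identity by an element of `m`,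
so every `z` is `ι u + x` with `x ∈ m`; and `u` is determined by `z`, because
`[ι u] = j⁻¹ u` vanishes only for `u = 0`. -/

theorem NonUnitalSubalgebra.unitization_bijective {R S A : Type*} [CommRing R] [Ring A]
    [Algebra R A] [SetLike S A] [NonUnitalSubringClass S A] [SMulMemClass S R A] (s : S)
    (h_inj : ∀ r, algebraMap R A r ∈ s → r = 0) (h_surj : ∀ a, ∃ r, a - algebraMap R A r ∈ s) :
    Function.Bijective (unitization s) := by
  refine ⟨AlgHomClass.unitization_injective' s (fun r hr hmem ↦ hr (h_inj r hmem)) _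
    fun _ ↦ by simp, fun a ↦ ?_⟩
  obtain ⟨r, hr⟩ := h_surj a
  exact ⟨.inl r + .inr ⟨_, hr⟩, by simp⟩

theorem Ideal.Quotient.mk_apply_eq_symm_of_section {R κ : Type*} [CommRing R] [CommRing κ]
    {m : Ideal R} (ι : κ →+* R) (j : (R ⧸ m) ≃+* κ)
    (hsec : ∀ z : R, Ideal.Quotient.mk m (ι (j (Ideal.Quotient.mk m z))) =
      Ideal.Quotient.mk m z) (u : κ) :
    Ideal.Quotient.mk m (ι u) = j.symm u := by
  obtain ⟨z, hz⟩ := Ideal.Quotient.mk_surjective (j.symm u)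
  simpa [hz] using hsec z

theorem stmt_1_general {R κ : Type*} [CommRing R] [Field κ] (m : Ideal R)
    (ι : κ →+* R) (j : (R ⧸ m) ≃+* κ)
    (hsec : ∀ z : R, Ideal.Quotient.mk m (ι (j (Ideal.Quotient.mk m z))) =
      Ideal.Quotient.mk m z) :
    letI : Algebra κ R := ι.toAlgebra
    let A : NonUnitalSubalgebra κ R :=
      (Submodule.restrictScalars κ m).toNonUnitalSubalgebra
        (fun x _ hx hy => Ideal.mul_mem_right _ m hx)
    ∃ e : Unitization κ A ≃+* R,
      ∀ (u : κ) (x : A), e (Unitization.inl u + Unitization.inr x) = ι u + (x : R) := by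
  let : Algebra κ R := ι.toAlgebra
  intro A
  have h_inj (u : κ) (hu : ι u ∈ m) : u = 0 := by
    rw [← Ideal.Quotient.eq_zero_iff_mem,
      Ideal.Quotient.mk_apply_eq_symm_of_section ι j hsec] at hu
    simpa using hu
  have h_surj (z : R) : z - ι (j (Ideal.Quotient.mk m z)) ∈ m := by
    rw [← Ideal.Quotient.eq_zero_iff_mem, map_sub, hsec, sub_self]
  refine ⟨RingEquiv.ofBijective (NonUnitalSubalgebra.unitization A)
    (NonUnitalSubalgebra.unitization_bijective A h_inj fun z ↦ ⟨_, h_surj z⟩),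
    fun u x ↦ by simp [RingHom.algebraMap_toAlgebra]⟩

/-- If `R` is a commutative ring, `m` a maximal ideal, `κ` a field,
`ι : κ →+* R` an injective ring homomorphism and `j : R ⧸ m ≃+* κ` a ring isomorphism
such that `ι ∘ j` is a section of the canonical projection, then, regarding `m` as a
non-unital commutative `κ`-algebra (via the multiplication of `R` and the scalar action
through `ι`), the map `φ : Unitization κ m → R`, `(u, x) ↦ ι u + x`, is a ring
isomorphism. -/
theorem stmt_1 {R κ : Type*} [CommRing R] [Field κ] (m : Ideal R) (hm : m.IsMaximal)
    (ι : κ →+* R) (hι : Function.Injective ι) (j : (R ⧸ m) ≃+* κ)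
    (hsec : ∀ z : R, Ideal.Quotient.mk m (ι (j (Ideal.Quotient.mk m z))) =
      Ideal.Quotient.mk m z) :
    letI : Algebra κ R := ι.toAlgebra
    let A : NonUnitalSubalgebra κ R :=
      (Submodule.restrictScalars κ m).toNonUnitalSubalgebra
        (fun x _ hx hy => Ideal.mul_mem_right _ m hx)
    ∃ e : Unitization κ A ≃+* R,
      ∀ (u : κ) (x : A), e (Unitization.inl u + Unitization.inr x) = ι u + (x : R) :=
  stmt_1_general m ι j hsec
end

section
/- Let R be a commutative local ring with maximal ideal m and let K be a subring of R that is a field. Suppose that every unit of R can be written as x + u with x ∈ m and u ∈ K (class (A) condition), that every unit of R belongs to K, and that every non-unit of R can be written as x + u with x ∈ m and u ∈ K (class (B) condition). Then m = {0} and R is a field. -/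
/-! Since `1 - a` is a unit for every `a ∈ m` and the units lie in `K`, the maximal ideal `m` lies in `K`.
But in the field `K` every nonzero element is invertible, while the elements of `m` are
non-units of `R`; hence `m = 0`, and a local ring with zero maximal ideal is a field. -/

theorem Subring.isUnit_of_mem_of_ne_zero {R : Type*} [Ring R] {K : Subring R} (hK : IsField K)
    {a : R} (ha : a ∈ K) (h0 : a ≠ 0) : IsUnit a := by
  let := hK.toField
  have : (⟨a, ha⟩ : K) ≠ 0 := fun h => h0 (congrArg Subtype.val h)
  exact (isUnit_iff_ne_zero.mpr this).map K.subtype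

namespace IsLocalRing

variable {R : Type*} [CommRing R] [IsLocalRing R]

theorem maximalIdeal_subset_of_isUnit_mem {K : Subring R} (hUK : ∀ a : R, IsUnit a → a ∈ K) :
    (maximalIdeal R : Set R) ⊆ K := by
  intro a ha
  have h1 : 1 - a ∈ K := hUK _ (isUnit_one_sub_self_of_mem_nonunits a ((mem_maximalIdeal a).1 ha))
  simpa using K.sub_mem K.one_mem h1

theorem maximalIdeal_eq_bot_of_isUnit_mem {K : Subring R} (hK : IsField K)
    (hUK : ∀ a : R, IsUnit a → a ∈ K) : maximalIdeal R = ⊥ :=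
  (Submodule.eq_bot_iff _).2 fun a ha => by_contra fun h0 =>
    (mem_maximalIdeal a).1 ha
      (Subring.isUnit_of_mem_of_ne_zero hK (maximalIdeal_subset_of_isUnit_mem hUK ha) h0)

end IsLocalRing

theorem stmt_7_general {R : Type*} [CommRing R] [IsLocalRing R] (K : Subring R) (hK : IsField K)
    (hUK : ∀ a : R, IsUnit a → a ∈ K) :
    IsLocalRing.maximalIdeal R = ⊥ ∧ IsField R := by
  have hm := IsLocalRing.maximalIdeal_eq_bot_of_isUnit_mem hK hUK
  exact ⟨hm, IsLocalRing.isField_iff_maximalIdeal_eq.2 hm⟩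

/-- Let `R` be a commutative local ring with maximal ideal `m` and `K`
a subring of `R` that is a field. If every unit of `R` can be written as `x + u` with
`x ∈ m`, `u ∈ K` (class (A) condition), every unit of `R` belongs to `K`, and every
non-unit of `R` can be written as `x + u` with `x ∈ m`, `u ∈ K` (class (B) condition),
then `m = {0}` and `R` is a field. -/
theorem stmt_7 {R : Type*} [CommRing R] [IsLocalRing R] (K : Subring R) (hK : IsField K)
    (hA : ∀ a : R, IsUnit a → ∃ x ∈ IsLocalRing.maximalIdeal R, ∃ u ∈ K, a = x + u)
    (hUK : ∀ a : R, IsUnit a → a ∈ K)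
    (hB : ∀ a : R, ¬ IsUnit a → ∃ x ∈ IsLocalRing.maximalIdeal R, ∃ u ∈ K, a = x + u) :
    IsLocalRing.maximalIdeal R = ⊥ ∧ IsField R :=
  stmt_7_general K hK hUK
end

section
/- Let R be a commutative ring that satisfies property (⋆), exhibited by a maximal ideal m of R and a subring K of R that is a field (i.e., the canonical projection R → R/m admits a ring homomorphism section with image K). Let S be a non-unital commutative R-algebra. Then the unitization Unitization R S satisfies property (⋆); more precisely, the set {(r,s) ∈ Unitization R S : r ∈ m} is a maximal ideal of Unitization R S which, together with the subfield {(u,0) : u ∈ K}, exhibits property (⋆) for Unitization R S. -/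
/-! The first coordinate `Unitization R S → R` is a surjective ring map split by `r ↦ (r, 0)`,
and property (⋆) pulls back along any split surjection `f : A → B` with splitting `i`: the
preimage `M` of `m` is maximal, `A ⧸ M ≅ B ⧸ m` through `f`, and composing a section
`B ⧸ m → B` with `i` gives a section of `A → A ⧸ M` whose image is the `i`-image of the old one. -/

namespace Ideal

variable {A B : Type*} [CommRing A] [CommRing B] {f : A →+* B} {i : B →+* A}
  {m : Ideal B} {s : B ⧸ m →+* B}

theorem mk_comp_section_comap (hfi : f.comp i = RingHom.id B)
    (hs : (Quotient.mk m).comp s = RingHom.id (B ⧸ m)) :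
    (Quotient.mk (m.comap f)).comp (i.comp (s.comp (quotientMap m f le_rfl))) =
      RingHom.id (A ⧸ m.comap f) := by
  refine Quotient.ringHom_ext (RingHom.ext fun a => ?_)
  have hsec : Quotient.mk m (s (Quotient.mk m (f a))) = Quotient.mk m (f a) :=
    RingHom.congr_fun hs _
  have hfia : f (i (s (Quotient.mk m (f a)))) = s (Quotient.mk m (f a)) :=
    RingHom.congr_fun hfi _
  simp only [RingHom.comp_apply, RingHom.id_apply, quotientMap_mk]
  rw [Quotient.eq, mem_comap, map_sub, hfia, ← Quotient.eq]
  exact hsec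

theorem range_section_comap (hfi : f.comp i = RingHom.id B) :
    Set.range (i.comp (s.comp (quotientMap m f le_rfl))) = i '' Set.range s := by
  have hf : Function.Surjective f := fun b => ⟨i b, RingHom.congr_fun hfi b⟩
  rw [RingHom.coe_comp, Set.range_comp, RingHom.coe_comp, Set.range_comp,
    (quotientMap_surjective hf).range_eq, Set.image_univ]

end Ideal

theorem Unitization.fstHom_comp_inlRingHom (R S : Type*) [CommSemiring R] [NonUnitalSemiring S]
    [Module R S] [IsScalarTower R S S] [SMulCommClass R S S] :
    (Unitization.fstHom R S).toRingHom.comp (Unitization.inlRingHom R S) = RingHom.id R :=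
  RingHom.ext fun _ => rfl

theorem stmt_8_general {R : Type*} [CommRing R] (m : Ideal R) (hm : m.IsMaximal)
    (K : Subring R)
    (hstar : ∃ s : R ⧸ m →+* R,
      (Ideal.Quotient.mk m).comp s = RingHom.id (R ⧸ m) ∧ Set.range s = (K : Set R))
    (S : Type*) [NonUnitalCommRing S] [Module R S] [SMulCommClass R S S]
    [IsScalarTower R S S] :
    let M : Ideal (Unitization R S) := Ideal.comap (Unitization.fstHom R S).toRingHom m
    (∀ z : Unitization R S, z ∈ M ↔ z.fst ∈ m) ∧
    M.IsMaximal ∧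
    ∃ s : Unitization R S ⧸ M →+* Unitization R S,
      (Ideal.Quotient.mk M).comp s = RingHom.id (Unitization R S ⧸ M) ∧
      Set.range s = Unitization.inlRingHom R S '' (K : Set R) := by
  obtain ⟨s, hs, hrange⟩ := hstar
  have hsplit := Unitization.fstHom_comp_inlRingHom R S
  refine ⟨fun _ => Iff.rfl,
    Ideal.comap_isMaximal_of_surjective _ fun r => ⟨Unitization.inl r, rfl⟩,
    _, Ideal.mk_comp_section_comap hsplit hs, ?_⟩
  rw [Ideal.range_section_comap hsplit, hrange]

/-- Let `R` be a commutative ring satisfying property (⋆), exhibited by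
a maximal ideal `m` and a subring `K` of `R` that is a field (the canonical projection
`R → R ⧸ m` has a ring homomorphism section with image `K`). Let `S` be a non-unital
commutative `R`-algebra. Then `{(r, s) : r ∈ m}` is a maximal ideal of
`Unitization R S` which, together with the subfield `{(u, 0) : u ∈ K}`, exhibits
property (⋆) for `Unitization R S`. -/
theorem stmt_8 {R : Type*} [CommRing R] (m : Ideal R) (hm : m.IsMaximal)
    (K : Subring R) (hK : IsField K)
    (hstar : ∃ s : R ⧸ m →+* R,
      (Ideal.Quotient.mk m).comp s = RingHom.id (R ⧸ m) ∧ Set.range s = (K : Set R))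
    (S : Type*) [NonUnitalCommRing S] [Module R S] [SMulCommClass R S S]
    [IsScalarTower R S S] :
    let M : Ideal (Unitization R S) := Ideal.comap (Unitization.fstHom R S).toRingHom m
    (∀ z : Unitization R S, z ∈ M ↔ z.fst ∈ m) ∧
    M.IsMaximal ∧
    ∃ s : Unitization R S ⧸ M →+* Unitization R S,
      (Ideal.Quotient.mk M).comp s = RingHom.id (Unitization R S ⧸ M) ∧
      Set.range s = Unitization.inlRingHom R S '' (K : Set R) :=
  stmt_8_general m hm K hstar S
end

section
/- Let R be a commutative ring, m a maximal ideal of R, and K a subring of R that is a field, such that every element a ∈ R can be written as a = x + u with x ∈ m and u ∈ K. Assume further that every element of R ∖ m is a non-zero-divisor of R. Then the localization R_m of R at m satisfies property (⋆): the extended ideal m·R_m is its unique maximal ideal, and every element of R_m can be written as y + f(u) with y ∈ m·R_m and u ∈ K, where f : R → R_m is the localization map; consequently R_m/(m·R_m) is isomorphic to K. -/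
/-! The field `K` embeds into the residue field `R ⧸ m`, and the decomposition `a = x + u` says
this embedding is onto, so `K ≃+* R ⧸ m`. Localizing at `m` does not change the residue field,
hence `K → R_m ⧸ m·R_m` is a bijection too; its surjectivity is the decomposition in `R_m`, and
its inverse, followed by the inclusion `K ⊆ R → R_m`, is the required section. -/

open IsLocalRing

theorem RingHom.exists_rightInverse_of_bijective_comp {S A B : Type*} [Semiring S] [Semiring A]
    [Semiring B] {g : S →+* A} {p : A →+* B} (h : Function.Bijective (p.comp g)) :
    ∃ s : B →+* A, p.comp s = RingHom.id B := by
  let e := RingEquiv.ofBijective (p.comp g) h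
  exact ⟨g.comp e.symm.toRingHom, RingHom.ext e.apply_symm_apply⟩

theorem Ideal.Quotient.mk_comp_surjective_iff {R A : Type*} [CommRing R] [CommRing A]
    (f : R →+* A) (I : Ideal A) (K : Subring R) :
    Function.Surjective ((Ideal.Quotient.mk I).comp (f.comp K.subtype)) ↔
      ∀ a : A, ∃ x ∈ I, ∃ u ∈ K, a = x + f u := by
  refine ⟨fun h a => ?_, fun h q => ?_⟩
  · obtain ⟨u, hu⟩ := h (Ideal.Quotient.mk I a)
    refine ⟨a - f u, ?_, u, u.2, (sub_add_cancel a _).symm⟩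
    rw [← Ideal.Quotient.eq]
    exact hu.symm
  · obtain ⟨a, rfl⟩ := Ideal.Quotient.mk_surjective q
    obtain ⟨x, hx, u, hu, rfl⟩ := h a
    refine ⟨⟨u, hu⟩, ?_⟩
    simp [Ideal.Quotient.eq_zero_iff_mem.2 hx]

theorem stmt_11_general {R : Type*} [CommRing R] (m : Ideal R) [m.IsMaximal]
    (K : Subring R) (hK : IsField K)
    (hdec : ∀ a : R, ∃ x ∈ m, ∃ u ∈ K, a = x + u) :
    let f : R →+* Localization.AtPrime m := algebraMap R (Localization.AtPrime m)
    let M : Ideal (Localization.AtPrime m) := Ideal.map f m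
    M = IsLocalRing.maximalIdeal (Localization.AtPrime m) ∧
    (∀ z : Localization.AtPrime m, ∃ y ∈ M, ∃ u ∈ K, z = y + f u) ∧
    (∃ s : Localization.AtPrime m ⧸ M →+* Localization.AtPrime m,
      (Ideal.Quotient.mk M).comp s = RingHom.id (Localization.AtPrime m ⧸ M)) ∧
    Nonempty ((Localization.AtPrime m ⧸ M) ≃+* K) := by
  intro f M
  have hM : M = maximalIdeal _ := IsLocalization.AtPrime.map_eq_maximalIdeal m _
  let := hK.toField
  have hbij_m : Function.Bijective ((Ideal.Quotient.mk m).comp ((RingHom.id R).comp K.subtype)) :=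
    ⟨RingHom.injective _, (Ideal.Quotient.mk_comp_surjective_iff _ m K).2 hdec⟩
  have hbij : Function.Bijective ((Ideal.Quotient.mk M).comp (f.comp K.subtype)) := by
    rw [hM]
    exact (IsLocalization.AtPrime.equivQuotMaximalIdeal m _).bijective.comp hbij_m
  exact ⟨hM, (Ideal.Quotient.mk_comp_surjective_iff f M K).1 hbij.2,
    RingHom.exists_rightInverse_of_bijective_comp hbij,
    ⟨(RingEquiv.ofBijective _ hbij).symm⟩⟩

/-- Let `R` be a commutative ring, `m` a maximal ideal of `R`, `K` a
subring of `R` that is a field, such that every `a ∈ R` is `x + u` with `x ∈ m`,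
`u ∈ K`, and such that every element of `R ∖ m` is a non-zero-divisor. Then the
localization `R_m` satisfies property (⋆): the extended ideal `m·R_m` is its unique
maximal ideal, every element of `R_m` is `y + f u` with `y ∈ m·R_m` and `u ∈ K`
(`f : R → R_m` the localization map), the canonical projection modulo `m·R_m` admits a
ring homomorphism section, and `R_m ⧸ m·R_m` is isomorphic to `K`. -/
theorem stmt_11 {R : Type*} [CommRing R] (m : Ideal R) [m.IsMaximal]
    (K : Subring R) (hK : IsField K)
    (hdec : ∀ a : R, ∃ x ∈ m, ∃ u ∈ K, a = x + u)
    (hreg : ∀ a : R, a ∉ m → a ∈ nonZeroDivisors R) :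
    let f : R →+* Localization.AtPrime m := algebraMap R (Localization.AtPrime m)
    let M : Ideal (Localization.AtPrime m) := Ideal.map f m
    M = IsLocalRing.maximalIdeal (Localization.AtPrime m) ∧
    (∀ z : Localization.AtPrime m, ∃ y ∈ M, ∃ u ∈ K, z = y + f u) ∧
    (∃ s : Localization.AtPrime m ⧸ M →+* Localization.AtPrime m,
      (Ideal.Quotient.mk M).comp s = RingHom.id (Localization.AtPrime m ⧸ M)) ∧
    Nonempty ((Localization.AtPrime m ⧸ M) ≃+* K) :=
  stmt_11_general m K hK hdec
end

section
/- Let R = ℚ[x]_{⟨x²+1⟩} be the localization of the polynomial ring ℚ[x] at its maximal ideal ⟨x²+1⟩. Then R does not satisfy property (⋆): there exist no maximal ideal m of R and ring homomorphism s : R/m → R such that the canonical projection π : R → R/m satisfies π ∘ s = id. -/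
/-!
The residue field of `R = ℚ[x]_{⟨x²+1⟩}` contains a square root of `-1`, namely the class of `x`,
so a section `s` would produce `r ∈ R` with `r² = -1`. But `R` maps to `ℝ`: evaluating at a real
number transcendental over `ℚ` sends every polynomial outside `⟨x²+1⟩` to a nonzero real, so it
extends to the localization, and `ℝ` has no square root of `-1`.
-/

open Polynomial

theorem transcendental_rat_liouvilleNumber : Transcendental ℚ (liouvilleNumber 3) := fun h =>
  transcendental_liouvilleNumber (by norm_num) ((IsFractionRing.isAlgebraic_iff ℤ ℚ ℝ).mpr h)

namespace Transcendental

variable {K L : Type*} [CommRing K] [Field L] [Algebra K L] {y : L}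

theorem isUnit_aeval (hy : Transcendental K y) {p : K[X]} (hp : p ≠ 0) :
    IsUnit (Polynomial.aeval y p) :=
  isUnit_iff_ne_zero.mpr fun h => hy ⟨p, hp, h⟩

noncomputable def liftAtPrime (hy : Transcendental K y) (P : Ideal K[X]) [P.IsPrime] :
    Localization.AtPrime P →+* L :=
  IsLocalization.lift (M := P.primeCompl) (g := (Polynomial.aeval y).toRingHom) fun p =>
    hy.isUnit_aeval fun h => p.2 (h ▸ P.zero_mem)

end Transcendental

theorem RingHom.sq_ne_neg_one {R F : Type*} [Ring R] [Field F] [LinearOrder F]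
    [IsStrictOrderedRing F] (f : R →+* F) (r : R) : r ^ 2 ≠ -1 := fun h => by
  have hf : f r ^ 2 = -1 := by rw [← map_pow, h, map_neg, map_one]
  nlinarith [sq_nonneg (f r)]

/-- Let `R = ℚ[x]_{⟨x²+1⟩}` be the localization of `ℚ[x]` at its
maximal ideal `⟨x² + 1⟩`. Then `R` does not satisfy property (⋆): there is no maximal
ideal `m` of `R` together with a ring homomorphism `s : R ⧸ m → R` that is a section of
the canonical projection. -/
theorem stmt_15 (I : Ideal (Polynomial ℚ)) [I.IsMaximal]
    (hI : I = Ideal.span {Polynomial.X ^ 2 + 1}) :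
    ¬ ∃ (m : Ideal (Localization.AtPrime I)) (_ : m.IsMaximal)
        (s : Localization.AtPrime I ⧸ m →+* Localization.AtPrime I),
      (Ideal.Quotient.mk m).comp s = RingHom.id (Localization.AtPrime I ⧸ m) := by
  rintro ⟨m, hm, s, -⟩
  have hmem : algebraMap ℚ[X] (Localization.AtPrime I) (X ^ 2 + 1) ∈ m := by
    rw [IsLocalRing.eq_maximalIdeal hm, IsLocalization.AtPrime.to_map_mem_maximal_iff _ I]
    exact hI ▸ Ideal.mem_span_singleton_self _
  set i := Ideal.Quotient.mk m (algebraMap ℚ[X] (Localization.AtPrime I) X)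
  have hi : i ^ 2 = -1 := by
    have h := Ideal.Quotient.eq_zero_iff_mem.mpr hmem
    rw [map_add, map_pow, map_one, map_add, map_pow, map_one] at h
    linear_combination h
  exact (transcendental_rat_liouvilleNumber.liftAtPrime I).sq_ne_neg_one (s i)
    (by rw [← map_pow, hi, map_neg, map_one])
end

section
/- Let R = ℚ[x]_{⟨x²+1⟩} be the localization of the polynomial ring ℚ[x] at its maximal ideal ⟨x²+1⟩. Then every subring K of R that is a field equals the image of the canonical ring homomorphism ℚ → R; in other words, ℚ is the unique maximal subfield of R. -/
/-!
A subfield `K` of the local ring `R` meets its maximal ideal `m` only in `0` and contains `ℚ`.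
Every `k ∈ R` is congruent mod `m` to `a + bθ` with `a, b ∈ ℚ` and `θ` the image of `X`, and
`θ² + 1 ∈ m`; hence for `k ∈ K` the element `(k - a)² + b²` lies in `K ∩ m`, so it vanishes.
As `ℚ[X]` is formally real, a sum of two squares vanishes in its localization `R` only if
both terms do, so `k = a`.
-/

open Polynomial IsLocalRing

theorem IsSumSq.map {R S : Type*} [AddMonoid R] [Mul R] [AddMonoid S] [Mul S]
    {F : Type*} [FunLike F R S] [AddMonoidHomClass F R S] [MulHomClass F R S] (f : F) {s : R}
    (hs : IsSumSq s) : IsSumSq (f s) := by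
  induction hs with
  | zero => simp
  | sq_add a _ ih => simpa using ih.sq_add (f a)

instance Polynomial.isFormallyReal {R : Type*} [CommRing R] [IsDomain R] [Infinite R]
    [IsFormallyReal R] : IsFormallyReal R[X] :=
  IsFormallyReal.of_eq_zero_of_eq_zero_of_mul_self_add fun {s a} hs h ↦ funext fun c ↦ by
    have hc : eval c a * eval c a + eval c s = 0 := by simpa using congrArg (eval c) h
    simpa using IsFormallyReal.eq_zero_of_add_right (.mul_self _) (hs.map (evalRingHom c)) hc

theorem IsLocalization.eq_zero_of_sq_add_sq_eq_zero {A S : Type*} [CommRing A] [CommRing S]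
    [Algebra A S] {M : Submonoid A} [IsLocalization M S] [IsFormallyReal A]
    (hM : M ≤ nonZeroDivisors A) {x y : S} (h : x ^ 2 + y ^ 2 = 0) : x = 0 := by
  obtain ⟨⟨a, s⟩, hx⟩ := IsLocalization.surj M x
  obtain ⟨⟨b, t⟩, hy⟩ := IsLocalization.surj M y
  simp only at hx hy
  have hsum : algebraMap A S ((a * t) * (a * t) + (b * s) * (b * s)) = 0 := by
    calc _ = algebraMap A S (s * t) ^ 2 * (x ^ 2 + y ^ 2) := by
          simp only [map_add, map_mul, ← hx, ← hy]; ring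
      _ = 0 := by rw [h, mul_zero]
  have hat : a * t = 0 := IsReduced.eq_zero _ ⟨2, by
    rw [pow_two]
    exact IsFormallyReal.eq_zero_of_add_right (.mul_self _) (.mul_self _)
      (IsLocalization.injective S hM (hsum.trans (map_zero _).symm))⟩
  have : x * algebraMap A S (s * t) = 0 := by
    rw [map_mul, ← mul_assoc, hx, ← map_mul, hat, map_zero]
  exact (IsLocalization.map_units S (s * t)).mul_left_eq_zero.mp this

theorem Subring.eq_zero_of_mem_of_isField {R : Type*} [Ring R] {K : Subring R}
    (hK : IsField K) {J : Ideal R} (hJ : J ≠ ⊤) {z : R} (hzK : z ∈ K) (hzJ : z ∈ J) : z = 0 := by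
  by_contra hz
  let := hK.toField
  have hunit : IsUnit (⟨z, hzK⟩ : K) := isUnit_iff_ne_zero.mpr fun h ↦ hz congr(($h : R))
  exact hJ (J.eq_top_of_isUnit_mem hzJ (hunit.map K.subtype))

theorem Subring.ratRange_le_of_isField {R : Type*} [Ring R] {K : Subring R} (hK : IsField K)
    (φ : ℚ →+* R) : φ.range ≤ K := by
  let := hK.toField
  have : Nontrivial R := K.subtype_injective.nontrivial
  have : CharZero R := charZero_of_injective_ringHom φ.injective
  have : CharZero K := K.subtype.charZero
  rintro _ ⟨q, rfl⟩
  rw [RingHom.ext_rat φ (K.subtype.comp (Rat.castHom K))]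
  exact (q : K).2

theorem IsLocalization.AtPrime.exists_sub_algebraMap_mem_maximalIdeal {R : Type*} [CommRing R]
    (p : Ideal R) [p.IsMaximal] {Rₚ : Type*} [CommRing Rₚ] [Algebra R Rₚ]
    [IsLocalization.AtPrime Rₚ p] [IsLocalRing Rₚ] (x : Rₚ) :
    ∃ a : R, x - algebraMap R Rₚ a ∈ maximalIdeal Rₚ := by
  obtain ⟨a, ha⟩ := (equivQuotMaximalIdeal p Rₚ).surjective
    (Ideal.Quotient.mk _ x)
  obtain ⟨a, rfl⟩ := Ideal.Quotient.mk_surjective a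
  exact ⟨a, Ideal.Quotient.eq.mp ha.symm⟩

theorem Polynomial.exists_sub_C_add_C_mul_X_mem_span {R : Type*} [CommRing R] {q : R[X]}
    (hq : q.Monic) (hdeg : q.natDegree = 2) (p : R[X]) :
    ∃ a b : R, p - (C a + C b * X) ∈ Ideal.span {q} := by
  have hr : (p %ₘ q).natDegree ≤ 1 := by
    have := natDegree_modByMonic_lt p hq (by rintro rfl; simp at hdeg)
    omega
  refine ⟨(p %ₘ q).coeff 0, (p %ₘ q).coeff 1, Ideal.mem_span_singleton'.mpr ⟨p /ₘ q, ?_⟩⟩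
  rw [add_comm, ← eq_X_add_C_of_natDegree_le_one hr]
  linear_combination modByMonic_add_div p q

theorem Ideal.sq_sub_add_sq_mem {R : Type*} [CommRing R] {J : Ideal R} {x a b θ : R}
    (hθ : θ ^ 2 + 1 ∈ J) (hx : x - (a + b * θ) ∈ J) : (x - a) ^ 2 + b ^ 2 ∈ J := by
  have : (x - a) ^ 2 + b ^ 2 = (x - a + b * θ) * (x - (a + b * θ)) + b ^ 2 * (θ ^ 2 + 1) := by
    ring
  rw [this]
  exact J.add_mem (J.mul_mem_left _ hx) (J.mul_mem_left _ hθ)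

/-- Let `R = ℚ[x]_{⟨x²+1⟩}` be the localization of `ℚ[x]` at its
maximal ideal `⟨x² + 1⟩`. Then every subring `K` of `R` that is a field equals the image
of the canonical ring homomorphism `ℚ → R`; in other words, `ℚ` is the unique maximal
subfield of `R`. -/
theorem stmt_16 (I : Ideal (Polynomial ℚ)) [I.IsMaximal]
    (hI : I = Ideal.span {Polynomial.X ^ 2 + 1}) :
    ∀ K : Subring (Localization.AtPrime I), IsField K →
      K = ((algebraMap (Polynomial ℚ) (Localization.AtPrime I)).comp
            (Polynomial.C : ℚ →+* Polynomial ℚ)).range := by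
  intro K hK
  refine le_antisymm (fun k hkK ↦ ?_) (K.ratRange_le_of_isField hK _)
  obtain ⟨p, hp⟩ := IsLocalization.AtPrime.exists_sub_algebraMap_mem_maximalIdeal I k
  have hmonic : (X ^ 2 + 1 : ℚ[X]).Monic := by monicity!
  obtain ⟨a, b, hab⟩ := exists_sub_C_add_C_mul_X_mem_span hmonic (by compute_degree!) p
  have hX : X ^ 2 + 1 ∈ I := hI ▸ Ideal.mem_span_singleton_self _
  rw [← hI] at hab
  set f := algebraMap ℚ[X] (Localization.AtPrime I)
  have hQ := K.ratRange_le_of_isField hK (f.comp C)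
  have hmax : ∀ p ∈ I, f p ∈ maximalIdeal _ := fun p ↦
    (IsLocalization.AtPrime.to_map_mem_maximal_iff _ I p).mpr
  have hθ : f X ^ 2 + 1 ∈ maximalIdeal _ := by
    simpa only [map_add, map_pow, map_one] using hmax _ hX
  have hk : k - (f (C a) + f (C b) * f X) ∈ maximalIdeal _ := by
    simpa only [map_sub, map_add, map_mul, sub_add_sub_cancel] using
      (maximalIdeal _).add_mem hp (hmax _ hab)
  have hzero : (k - f (C a)) ^ 2 + f (C b) ^ 2 = 0 :=
    K.eq_zero_of_mem_of_isField hK (maximalIdeal.isMaximal _).ne_top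
      (K.add_mem (K.pow_mem (K.sub_mem hkK (hQ ⟨a, rfl⟩)) 2) (K.pow_mem (hQ ⟨b, rfl⟩) 2))
      (Ideal.sq_sub_add_sq_mem hθ hk)
  exact ⟨a, (sub_eq_zero.mp (IsLocalization.eq_zero_of_sq_add_sq_eq_zero
    I.primeCompl_le_nonZeroDivisors hzero)).symm⟩
end

section
/- Let R be a commutative integral domain, m a maximal ideal of R, and K a subring of R that is a field, such that every element a ∈ R can be written as a = x + u with x ∈ m and u ∈ K. Then the localization R_m of R at m is a local ring with maximal ideal m·R_m in which every unit can be written as y + f(u) with y ∈ m·R_m and u ∈ K, where f : R → R_m is the localization map; that is, R_m belongs to class (A). -/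
/-!
Since `m` is maximal, the residue field of `R_m` is `R/m`, so every element of `R_m` is congruent
modulo `m·R_m` to the image of an element of `R`, and that element is in turn congruent modulo `m`
to an element of `K`.
-/

open IsLocalRing

section

variable {R : Type*} [CommRing R] {Rₘ : Type*} [CommRing Rₘ] [Algebra R Rₘ] [IsLocalRing Rₘ]

theorem IsLocalization.AtPrime.exists_sub_algebraMap_mem_maximalIdeal_s19 (m : Ideal R) [m.IsMaximal]
    [IsLocalization.AtPrime Rₘ m] (z : Rₘ) :
    ∃ r : R, z - algebraMap R Rₘ r ∈ maximalIdeal Rₘ := by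
  obtain ⟨q, hq⟩ := (equivQuotMaximalIdeal m Rₘ).surjective (Ideal.Quotient.mk _ z)
  obtain ⟨r, rfl⟩ := Ideal.Quotient.mk_surjective q
  refine ⟨r, Ideal.Quotient.eq.mp ?_⟩
  rw [← hq, equivQuotMaximalIdeal_apply_mk]

theorem IsLocalization.AtPrime.exists_sub_algebraMap_mem_maximalIdeal_of_forall_exists_add
    (m : Ideal R) [m.IsMaximal] [IsLocalization.AtPrime Rₘ m] {S : Set R}
    (hdec : ∀ a : R, ∃ x ∈ m, ∃ u ∈ S, a = x + u) (z : Rₘ) :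
    ∃ u ∈ S, z - algebraMap R Rₘ u ∈ maximalIdeal Rₘ := by
  obtain ⟨r, hr⟩ := exists_sub_algebraMap_mem_maximalIdeal_s19 m z
  obtain ⟨x, hx, u, hu, rfl⟩ := hdec r
  have hx' : algebraMap R Rₘ x ∈ maximalIdeal Rₘ := by
    rw [← map_eq_maximalIdeal m Rₘ]
    exact Ideal.mem_map_of_mem _ hx
  refine ⟨u, hu, ?_⟩
  convert (maximalIdeal Rₘ).add_mem hr hx' using 1
  rw [map_add]
  ring

end

theorem stmt_19_general {R : Type*} [CommRing R] (m : Ideal R) [m.IsMaximal]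
    (K : Subring R)
    (hdec : ∀ a : R, ∃ x ∈ m, ∃ u ∈ K, a = x + u) :
    let f : R →+* Localization.AtPrime m := algebraMap R (Localization.AtPrime m)
    IsLocalRing (Localization.AtPrime m) ∧
    Ideal.map f m = IsLocalRing.maximalIdeal (Localization.AtPrime m) ∧
    ∀ z : Localization.AtPrime m, IsUnit z →
      ∃ y ∈ Ideal.map f m, ∃ u ∈ K, z = y + f u := by
  intro f
  refine ⟨inferInstance, Localization.AtPrime.map_eq_maximalIdeal, fun z _ ↦ ?_⟩
  obtain ⟨u, hu, hz⟩ :=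
    IsLocalization.AtPrime.exists_sub_algebraMap_mem_maximalIdeal_of_forall_exists_add m hdec z
  refine ⟨z - f u, ?_, u, hu, (sub_add_cancel z (f u)).symm⟩
  rwa [Localization.AtPrime.map_eq_maximalIdeal]

/-- Let `R` be a commutative integral domain, `m` a maximal ideal of
`R`, and `K` a subring of `R` that is a field, such that every `a ∈ R` can be written as
`a = x + u` with `x ∈ m` and `u ∈ K`. Then the localization `R_m` is a local ring whose
maximal ideal is `m·R_m`, and every unit of `R_m` can be written as `y + f u` with
`y ∈ m·R_m` and `u ∈ K` (`f : R → R_m` the localization map); that is, `R_m` belongs to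
class (A). -/
theorem stmt_19 {R : Type*} [CommRing R] [IsDomain R] (m : Ideal R) [m.IsMaximal]
    (K : Subring R) (hK : IsField K)
    (hdec : ∀ a : R, ∃ x ∈ m, ∃ u ∈ K, a = x + u) :
    let f : R →+* Localization.AtPrime m := algebraMap R (Localization.AtPrime m)
    IsLocalRing (Localization.AtPrime m) ∧
    Ideal.map f m = IsLocalRing.maximalIdeal (Localization.AtPrime m) ∧
    ∀ z : Localization.AtPrime m, IsUnit z →
      ∃ y ∈ Ideal.map f m, ∃ u ∈ K, z = y + f u :=
  stmt_19_general m K hdec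
end
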